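/- Let f : ℝ^d → ℝ be L-Lipschitz with respect to the ℓ_q-norm, h > 0, and let U be uniform on the ℓ1-ball B_1^d. Define f_h(x) = E[f(x + hU)]. Then for all x, |f_h(x) - f(x)| ≤ L·h·E[||U||_q], and in particular |f_h(x) - f(x)| ≤ L·h·q·d^{1/q}/(d+1) for q ∈ [1, ∞). -/

import Mathlib

/-!
Pointwise `|f (x + h u) - f x| ≤ L h ‖u‖_q`, and integrating gives the first bound.
For the second, Jensen's inequality for the concave `t ↦ t ^ (1 / q)` gives
`E ‖U‖_q ≤ (d E |U₁| ^ q) ^ (1 / q)`. The moment comes from integrating `exp (-‖u‖₁) |u₁| ^ q`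
over `ℝᵈ` in two ways: as a product of one-dimensional Gamma integrals it is `2ᵈ Γ(q + 1)`;
writing `exp (-‖u‖₁) = ∫_{r > ‖u‖₁} e⁻ʳ dr` and using that `{‖u‖₁ < r} = r • B₁ᵈ`, it is
`Γ(q + d + 1) ∫_{B₁ᵈ} |u₁| ^ q`. Hence `E |U₁| ^ q = Γ(d + 1) Γ(q + 1) / Γ(q + d + 1)`, which
log-convexity of `Γ` bounds by `(q / (d + 1)) ^ q`.
-/

open MeasureTheory ProbabilityTheory

/-- The uniform distribution on the open ℓ¹-ball `B₁ᵈ = {x : ‖x‖₁ < 1}` in `ℝᵈ`. -/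
noncomputable def uniformBall (d : ℕ) : Measure (Fin d → ℝ) :=
  ProbabilityTheory.cond volume {x | ∑ i, |x i| < 1}

open Real Set Module
open scoped ENNReal

namespace Real

theorem log_Gamma_add_one {b : ℝ} (hb : 0 < b) :
    log (Gamma (b + 1)) = log (Gamma b) + log b := by
  rw [Gamma_add_one hb.ne', log_mul hb.ne' (Gamma_pos_of_pos hb).ne', add_comm]

theorem rpow_mul_Gamma_le_Gamma_add {a q : ℝ} (ha : 0 < a) (hq : 1 ≤ q) :
    a ^ q * Gamma a ≤ Gamma (a + q) := by
  -- the slope of `log ∘ Gamma` on `[a, a + q]` is at least its slope `log a` on `[a, a + 1]`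
  have hslope := convexOn_log_Gamma.secant_mono (a := a) (x := a + 1) (y := a + q) ha
    (mem_Ioi.2 (by linarith)) (mem_Ioi.2 (by linarith)) (by simp) (by simp; linarith)
    (by linarith)
  simp only [Function.comp_apply, log_Gamma_add_one ha, add_sub_cancel_left, div_one] at hslope
  rw [le_div_iff₀ (by linarith)] at hslope
  rw [← log_le_log_iff (by positivity) (Gamma_pos_of_pos (by linarith)),
    log_mul (by positivity) (Gamma_pos_of_pos ha).ne', log_rpow ha]
  linarith

theorem Gamma_add_le_rpow_mul_Gamma {a q : ℝ} (ha : 0 < a) (hq : 1 ≤ q) :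
    Gamma (a + q) ≤ (a + q - 1) ^ q * Gamma a := by
  have hb : 0 < a + q - 1 := by linarith
  -- the slope of `log ∘ Gamma` on `[a, a + q]` is at most its slope `log (a + q - 1)`
  -- on `[a + q - 1, a + q]`
  have hslope := convexOn_log_Gamma.secant_mono (a := a + q) (x := a) (y := a + q - 1)
    (mem_Ioi.2 (by linarith)) ha hb (by simp; linarith) (by simp) (by linarith)
  have hstep : log (Gamma (a + q)) = log (Gamma (a + q - 1)) + log (a + q - 1) := by
    simpa using log_Gamma_add_one hb
  simp only [Function.comp_apply, hstep, sub_add_cancel_left, show a - (a + q) = -q by ring,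
    show a + q - 1 - (a + q) = -1 by ring, neg_div_neg_eq, div_one] at hslope
  rw [div_le_iff_of_neg (by linarith)] at hslope
  rw [← log_le_log_iff (Gamma_pos_of_pos (by linarith)) (by positivity),
    log_mul (by positivity) (Gamma_pos_of_pos ha).ne', log_rpow hb, hstep]
  linarith

end Real

theorem ofReal_exp_neg_eq_setLIntegral (a : ℝ) :
    ENNReal.ofReal (exp (-a)) = ∫⁻ r in Ioi a, ENNReal.ofReal (exp (-r)) := by
  rw [← integral_exp_neg_Ioi, ofReal_integral_eq_lintegral_ofReal
    (by simpa using (exp_neg_integrableOn_Ioi a one_pos).integrable)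
    (.of_forall fun r ↦ (exp_pos _).le)]

theorem lintegral_Ioi_exp_neg_mul_rpow {s : ℝ} (hs : -1 < s) :
    ∫⁻ r in Ioi 0, ENNReal.ofReal (exp (-r)) * ENNReal.ofReal (r ^ s) =
      ENNReal.ofReal (Gamma (s + 1)) := by
  have hΓ := GammaIntegral_convergent (s := s + 1) (by linarith)
  simp only [add_sub_cancel_right] at hΓ
  rw [Gamma_eq_integral (by linarith), add_sub_cancel_right,
    ofReal_integral_eq_lintegral_ofReal hΓ
      ((ae_restrict_iff' measurableSet_Ioi).2 (.of_forall fun r (_ : 0 < r) ↦ by positivity))]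
  refine setLIntegral_congr_fun measurableSet_Ioi fun r hr ↦ ?_
  rw [ENNReal.ofReal_mul (exp_pos _).le]

section Homogeneous

variable {E : Type*} [NormedAddCommGroup E] [NormedSpace ℝ E] [FiniteDimensional ℝ E]
  [MeasurableSpace E] [BorelSpace E] (μ : Measure E) [μ.IsAddHaarMeasure]

theorem lintegral_comp_smul_addHaar {r : ℝ} (hr : r ≠ 0) {f : E → ℝ≥0∞} (hf : Measurable f) :
    ∫⁻ x, f (r • x) ∂μ = ENNReal.ofReal |(r ^ finrank ℝ E)⁻¹| * ∫⁻ x, f x ∂μ := by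
  rw [← lintegral_map hf (measurable_const_smul r), Measure.map_addHaar_smul μ hr,
    lintegral_smul_measure, smul_eq_mul]

variable {N : E → ℝ} {H : E → ℝ≥0∞} {q : ℝ}

theorem setLIntegral_sublevel_of_homogeneous (hN : Measurable N) (hH : Measurable H)
    (hNr : ∀ r > 0, ∀ x, N (r • x) = r * N x)
    (hHr : ∀ r > 0, ∀ x, H (r • x) = ENNReal.ofReal (r ^ q) * H x) {r : ℝ} (hr : 0 < r) :
    ∫⁻ x in {x | N x < r}, H x ∂μ =
      ENNReal.ofReal (r ^ (q + finrank ℝ E)) * ∫⁻ x in {x | N x < 1}, H x ∂μ := by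
  have hmeas : ∀ s : ℝ, MeasurableSet {x | N x < s} :=
    fun s ↦ measurableSet_lt hN measurable_const
  have hrescale : ∀ x, {x | N x < r}.indicator H (r • x) =
      ENNReal.ofReal (r ^ q) * {x | N x < 1}.indicator H x := by
    intro x
    simp only [indicator_apply, mem_ofPred_eq, hNr r hr, hHr r hr, mul_lt_iff_lt_one_right hr]
    split_ifs <;> simp
  have key := lintegral_comp_smul_addHaar μ hr.ne' (hH.indicator (hmeas r))
  rw [lintegral_congr hrescale, lintegral_const_mul _ (hH.indicator (hmeas 1)),
    lintegral_indicator (hmeas _), lintegral_indicator (hmeas _)] at key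
  have hd : ENNReal.ofReal (r ^ finrank ℝ E) * ENNReal.ofReal |(r ^ finrank ℝ E)⁻¹| = 1 := by
    rw [abs_of_pos (by positivity), ← ENNReal.ofReal_mul (by positivity),
      mul_inv_cancel₀ (by positivity), ENNReal.ofReal_one]
  calc ∫⁻ x in {x | N x < r}, H x ∂μ
      = ENNReal.ofReal (r ^ finrank ℝ E) *
          (ENNReal.ofReal |(r ^ finrank ℝ E)⁻¹| * ∫⁻ x in {x | N x < r}, H x ∂μ) := by
        rw [← mul_assoc, hd, one_mul]
    _ = _ := by
        rw [← key, ← mul_assoc, ← ENNReal.ofReal_mul (by positivity), rpow_add hr, rpow_natCast,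
          mul_comm (r ^ finrank ℝ E)]

theorem lintegral_exp_neg_mul_of_homogeneous (hN : Measurable N) (hH : Measurable H)
    (hN0 : ∀ x, 0 ≤ N x) (hNr : ∀ r > 0, ∀ x, N (r • x) = r * N x)
    (hHr : ∀ r > 0, ∀ x, H (r • x) = ENNReal.ofReal (r ^ q) * H x)
    (hq : -1 < q + finrank ℝ E) :
    ∫⁻ x, ENNReal.ofReal (exp (-N x)) * H x ∂μ =
      ENNReal.ofReal (Gamma (q + finrank ℝ E + 1)) * ∫⁻ x in {x | N x < 1}, H x ∂μ := by
  set e : ℝ → ℝ≥0∞ := fun r ↦ ENNReal.ofReal (exp (-r))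
  have he : Measurable e := by fun_prop
  have hT : MeasurableSet {p : E × ℝ | N p.1 < p.2} :=
    measurableSet_lt (hN.comp measurable_fst) measurable_snd
  set F : E × ℝ → ℝ≥0∞ := {p : E × ℝ | N p.1 < p.2}.indicator (fun p ↦ e p.2 * H p.1)
  have hF : Measurable F := ((he.comp measurable_snd).mul (hH.comp measurable_fst)).indicator hT
  calc ∫⁻ x, e (N x) * H x ∂μ
      = ∫⁻ x, (∫⁻ r in Ioi 0, F (x, r)) ∂μ := by
        refine lintegral_congr fun x ↦ ?_
        have hslice : ∀ r, F (x, r) = (Ioi (N x)).indicator (fun r ↦ e r * H x) r := fun r ↦ by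
          simp only [F, indicator_apply, mem_ofPred_eq, mem_Ioi]
        rw [lintegral_congr hslice, setLIntegral_indicator measurableSet_Ioi,
          inter_eq_left.2 (Ioi_subset_Ioi (hN0 x)), lintegral_mul_const _ he,
          ← ofReal_exp_neg_eq_setLIntegral]
    _ = ∫⁻ r in Ioi 0, ∫⁻ x, F (x, r) ∂μ := lintegral_lintegral_swap hF.aemeasurable
    _ = ∫⁻ r in Ioi 0,
          e r * ENNReal.ofReal (r ^ (q + finrank ℝ E)) * ∫⁻ x in {x | N x < 1}, H x ∂μ := by
        refine setLIntegral_congr_fun measurableSet_Ioi fun r (hr : 0 < r) ↦ ?_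
        have hslice : ∀ x, F (x, r) = {x | N x < r}.indicator (fun x ↦ e r * H x) x := fun x ↦ by
          simp only [F, indicator_apply, mem_ofPred_eq]
        rw [lintegral_congr hslice, lintegral_indicator (measurableSet_lt hN measurable_const),
          lintegral_const_mul _ hH, setLIntegral_sublevel_of_homogeneous μ hN hH hNr hHr hr,
          mul_assoc]
    _ = _ := by
        rw [lintegral_mul_const _ (by fun_prop), lintegral_Ioi_exp_neg_mul_rpow hq]

end Homogeneous

theorem Integrable.comp_abs_of_integrableOn_Ioi {f : ℝ → ℝ} (hf : IntegrableOn f (Ioi 0)) :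
    Integrable (fun x ↦ f |x|) := by
  have hpos : IntegrableOn (fun x ↦ f |x|) (Ioi 0) :=
    hf.congr_fun (fun x (hx : 0 < x) ↦ by rw [abs_of_pos hx]) measurableSet_Ioi
  have hneg : IntegrableOn (fun x ↦ f |x|) (Iic 0) := by
    have hmirror : MeasurableEmbedding fun x : ℝ ↦ -x := (Homeomorph.neg ℝ).measurableEmbedding
    rw [← Measure.map_neg_eq_self (volume : Measure ℝ), hmirror.integrableOn_map_iff]
    simp_rw [Function.comp_def, abs_neg, neg_preimage, neg_Iic, neg_zero]
    exact (integrableOn_Ici_iff_integrableOn_Ioi).mpr hpos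
  rw [← integrableOn_univ, ← Iic_union_Ioi (a := (0 : ℝ))]
  exact hneg.union hpos

theorem integral_exp_neg_abs_mul_abs_rpow {q : ℝ} (hq : -1 < q) :
    ∫ t : ℝ, exp (-|t|) * |t| ^ q = 2 * Gamma (q + 1) := by
  rw [integral_comp_abs (f := fun t ↦ exp (-t) * t ^ q), Gamma_eq_integral (by linarith),
    add_sub_cancel_right]

theorem integrable_exp_neg_abs_mul_abs_rpow {q : ℝ} (hq : -1 < q) :
    Integrable fun t : ℝ ↦ exp (-|t|) * |t| ^ q :=
  Integrable.comp_abs_of_integrableOn_Ioi (f := fun t ↦ exp (-t) * t ^ q)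
    (by simpa using GammaIntegral_convergent (s := q + 1) (by linarith))

section L1Ball

variable {ι : Type*} [Fintype ι] {q : ℝ}

theorem lintegral_exp_neg_sum_abs_mul_abs_rpow (hq : -1 < q) (i : ι) :
    ∫⁻ u : ι → ℝ, ENNReal.ofReal (exp (-∑ j, |u j|)) * ENNReal.ofReal (|u i| ^ q) =
      ENNReal.ofReal (2 ^ Fintype.card ι * Gamma (q + 1)) := by
  classical
  set w : ι → ℝ → ℝ := fun j t ↦ exp (-|t|) * if j = i then |t| ^ q else 1
  have hw : ∀ j, Integrable (w j) := fun j ↦ by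
    by_cases hj : j = i
    · simpa [w, hj] using integrable_exp_neg_abs_mul_abs_rpow hq
    · simpa [w, hj] using integrable_exp_neg_abs_mul_abs_rpow (q := 0) (by norm_num)
  have hprod : ∀ u : ι → ℝ, ENNReal.ofReal (exp (-∑ j, |u j|)) * ENNReal.ofReal (|u i| ^ q) =
      ENNReal.ofReal (∏ j, w j (u j)) := fun u ↦ by
    rw [← ENNReal.ofReal_mul (exp_pos _).le, Finset.prod_mul_distrib, ← exp_sum,
      ← Finset.sum_neg_distrib, Finset.prod_ite_eq' Finset.univ i (fun j ↦ |u j| ^ q)]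
    simp
  have hint : ∀ j, ∫ t, w j t = 2 * if j = i then Gamma (q + 1) else 1 := fun j ↦ by
    by_cases hj : j = i
    · simpa [w, hj] using integral_exp_neg_abs_mul_abs_rpow hq
    · simpa [w, hj] using integral_exp_neg_abs_mul_abs_rpow (q := 0) (by norm_num)
  have hint_prod : Integrable fun u : ι → ℝ ↦ ∏ j, w j (u j) := Integrable.fintype_prod hw
  rw [lintegral_congr hprod, ← ofReal_integral_eq_lintegral_ofReal hint_prod
    (.of_forall fun u ↦ Finset.prod_nonneg fun j _ ↦ by positivity),
    integral_fintype_prod_volume_eq_prod, Finset.prod_congr rfl fun j _ ↦ hint j,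
    Finset.prod_mul_distrib, Finset.prod_const, Finset.prod_ite_eq' Finset.univ i]
  simp

theorem setLIntegral_l1Ball_abs_rpow (hq : -1 < q) (i : ι) :
    ∫⁻ u in {u : ι → ℝ | ∑ j, |u j| < 1}, ENNReal.ofReal (|u i| ^ q) =
      ENNReal.ofReal (2 ^ Fintype.card ι * Gamma (q + 1) / Gamma (q + Fintype.card ι + 1)) := by
  have hcard : (0 : ℝ) ≤ Fintype.card ι := Nat.cast_nonneg _
  have hfinrank : finrank ℝ (ι → ℝ) = Fintype.card ι := finrank_fintype_fun_eq_card ℝ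
  have hscale := lintegral_exp_neg_mul_of_homogeneous volume
    (N := fun u : ι → ℝ ↦ ∑ j, |u j|) (H := fun u ↦ ENNReal.ofReal (|u i| ^ q)) (q := q)
    (by fun_prop) (by fun_prop) (fun u ↦ Finset.sum_nonneg fun j _ ↦ abs_nonneg _)
    (fun r hr u ↦ by simp [abs_mul, abs_of_pos hr, Finset.mul_sum])
    (fun r hr u ↦ by
      simp only [Pi.smul_apply, smul_eq_mul, abs_mul, abs_of_pos hr]
      rw [mul_rpow hr.le (abs_nonneg _), ENNReal.ofReal_mul (by positivity)])
    (by rw [hfinrank]; linarith)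
  rw [lintegral_exp_neg_sum_abs_mul_abs_rpow hq i, hfinrank] at hscale
  have hΓ : 0 < Gamma (q + Fintype.card ι + 1) := Gamma_pos_of_pos (by linarith)
  rw [ENNReal.ofReal_div_of_pos hΓ, ENNReal.eq_div_iff (by simpa using hΓ) ENNReal.ofReal_ne_top,
    hscale]

theorem volume_l1Ball :
    volume {u : ι → ℝ | ∑ j, |u j| < 1} =
      ENNReal.ofReal (2 ^ Fintype.card ι / Gamma (Fintype.card ι + 1)) := by
  simpa [one_add_one_eq_two, Gamma_two] using volume_sum_rpow_lt_one ι le_rfl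

theorem volume_l1Ball_ne_zero : volume {u : ι → ℝ | ∑ j, |u j| < 1} ≠ 0 := by
  have := Gamma_pos_of_pos (by positivity : (0 : ℝ) < Fintype.card ι + 1)
  rw [volume_l1Ball]
  exact (ENNReal.ofReal_pos.2 (by positivity)).ne'

theorem volume_l1Ball_ne_top : volume {u : ι → ℝ | ∑ j, |u j| < 1} ≠ ⊤ := by
  rw [volume_l1Ball]
  exact ENNReal.ofReal_ne_top

theorem l1Ball_subset_closedBall : {u : ι → ℝ | ∑ j, |u j| < 1} ⊆ Metric.closedBall 0 1 :=
  fun u hu ↦ mem_closedBall_zero_iff.2 <| (pi_norm_le_iff_of_nonneg zero_le_one).2 fun i ↦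
    (Finset.single_le_sum (fun j _ ↦ abs_nonneg (u j)) (Finset.mem_univ i)).trans hu.le

end L1Ball

section LqNorm

variable {ι : Type*} [Fintype ι] {q : ℝ}

theorem sum_abs_rpow_rpow_one_div_eq_norm_toLp (hq : 0 < q) (u : ι → ℝ) :
    (∑ i, |u i| ^ q) ^ (1 / q) = ‖WithLp.toLp (ENNReal.ofReal q) u‖ := by
  rw [PiLp.norm_eq_sum (by rwa [ENNReal.toReal_ofReal hq.le])]
  simp [hq.le]

theorem continuous_sum_abs_rpow_rpow_one_div (hq : 0 < q) :
    Continuous fun u : ι → ℝ ↦ (∑ i, |u i| ^ q) ^ (1 / q) := by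
  fun_prop (disch := positivity)

theorem sum_abs_smul_rpow_rpow_one_div (hq : 0 < q) {h : ℝ} (hh : 0 ≤ h) (u : ι → ℝ) :
    (∑ i, |(h • u) i| ^ q) ^ (1 / q) = h * (∑ i, |u i| ^ q) ^ (1 / q) := by
  simp_rw [Pi.smul_apply, smul_eq_mul, abs_mul, abs_of_nonneg hh, mul_rpow hh (abs_nonneg _),
    ← Finset.mul_sum]
  rw [mul_rpow (by positivity) (by positivity), ← rpow_mul hh, mul_one_div_cancel hq.ne', rpow_one]

variable {L : ℝ} {f : (ι → ℝ) → ℝ}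

theorem continuous_of_abs_sub_le_lq (hq : 1 ≤ q)
    (hf : ∀ x y, |f x - f y| ≤ L * (∑ i, |x i - y i| ^ q) ^ (1 / q)) : Continuous f := by
  have : Fact (1 ≤ ENNReal.ofReal q) := ⟨by simpa using hq⟩
  have hlip : LipschitzWith L.toNNReal (f ∘ WithLp.ofLp (p := ENNReal.ofReal q)) :=
    .of_dist_le' fun x y ↦ by
      simpa [Real.dist_eq, dist_eq_norm, ← sum_abs_rpow_rpow_one_div_eq_norm_toLp
        (by linarith : 0 < q)] using hf x y
  exact hlip.continuous.comp (PiLp.continuous_toLp _ _)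

theorem abs_sub_le_of_abs_sub_le_lq (hq : 0 < q)
    (hf : ∀ x y, |f x - f y| ≤ L * (∑ i, |x i - y i| ^ q) ^ (1 / q))
    {h : ℝ} (hh : 0 ≤ h) (x u : ι → ℝ) :
    |f (x + h • u) - f x| ≤ L * h * (∑ i, |u i| ^ q) ^ (1 / q) := by
  have hxy := hf (x + h • u) x
  simp only [Pi.add_apply, add_sub_cancel_left] at hxy
  rwa [sum_abs_smul_rpow_rpow_one_div hq hh, ← mul_assoc] at hxy

end LqNorm

section Expectation

variable {α : Type*} [MeasurableSpace α] {μ : Measure α} [IsProbabilityMeasure μ]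

theorem abs_integral_sub_le_integral {F g : α → ℝ} {c : ℝ} (hF : AEStronglyMeasurable F μ)
    (hg : Integrable g μ) (hFg : ∀ᵐ a ∂μ, |F a - c| ≤ g a) :
    |∫ a, F a ∂μ - c| ≤ ∫ a, g a ∂μ := by
  have hFc : Integrable (fun a ↦ F a - c) μ :=
    hg.mono' (hF.sub aestronglyMeasurable_const) (by simpa only [Real.norm_eq_abs] using hFg)
  have hFi : Integrable F μ :=
    (hFc.add (integrable_const c)).congr (.of_forall fun a ↦ sub_add_cancel (F a) c)
  have hsub : ∫ a, (F a - c) ∂μ = ∫ a, F a ∂μ - c := by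
    simp [integral_sub hFi (integrable_const c)]
  rw [← hsub, ← Real.norm_eq_abs]
  exact norm_integral_le_of_norm_le hg (by simpa only [Real.norm_eq_abs] using hFg)

theorem integral_rpow_le_rpow_integral {G : α → ℝ} {p : ℝ} (hp₀ : 0 ≤ p) (hp₁ : p ≤ 1)
    (hG₀ : ∀ᵐ a ∂μ, 0 ≤ G a) (hG : Integrable G μ) (hGp : Integrable (fun a ↦ G a ^ p) μ) :
    ∫ a, G a ^ p ∂μ ≤ (∫ a, G a ∂μ) ^ p :=
  (concaveOn_rpow hp₀ hp₁).le_map_integral (continuous_rpow_const hp₀).continuousOn isClosed_Ici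
    hG₀ hG hGp

end Expectation

noncomputable def l1BallMoment (d : ℕ) (q : ℝ) : ℝ :=
  Gamma (d + 1) * Gamma (q + 1) / Gamma (q + d + 1)

section UniformBall

variable {d : ℕ}

instance : IsProbabilityMeasure (uniformBall d) :=
  cond_isProbabilityMeasure_of_finite volume_l1Ball_ne_zero volume_l1Ball_ne_top

theorem Continuous.integrable_uniformBall {E : Type*} [NormedAddCommGroup E]
    {g : (Fin d → ℝ) → E} (hg : Continuous g) :
    Integrable g (uniformBall d) :=
  ((hg.continuousOn.integrableOn_compact (isCompact_closedBall 0 1)).mono_set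
    l1Ball_subset_closedBall).smul_measure (ENNReal.inv_ne_top.2 volume_l1Ball_ne_zero)

theorem integral_abs_rpow_uniformBall {q : ℝ} (hq : -1 < q) (i : Fin d) :
    ∫ u, |u i| ^ q ∂uniformBall d = l1BallMoment d q := by
  have hd : (0 : ℝ) ≤ d := Nat.cast_nonneg d
  have hΓd := Gamma_pos_of_pos (by linarith : (0 : ℝ) < d + 1)
  have hΓq := Gamma_pos_of_pos (by linarith : (0 : ℝ) < q + 1)
  have hΓqd := Gamma_pos_of_pos (by linarith : (0 : ℝ) < q + d + 1)
  rw [integral_eq_lintegral_of_nonneg_ae (.of_forall fun u ↦ by positivity)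
      ((measurable_pi_apply i).abs.pow_const q).aestronglyMeasurable,
    uniformBall, ProbabilityTheory.cond, lintegral_smul_measure,
    setLIntegral_l1Ball_abs_rpow hq i, volume_l1Ball, smul_eq_mul, ENNReal.toReal_mul,
    ENNReal.toReal_inv, Fintype.card_fin,
    ENNReal.toReal_ofReal (by positivity), ENNReal.toReal_ofReal (by positivity), l1BallMoment]
  field_simp

end UniformBall

theorem l1BallMoment_le (d : ℕ) {q : ℝ} (hq : 1 ≤ q) : l1BallMoment d q ≤ (q / (d + 1)) ^ q := by
  have hd : (0 : ℝ) < d + 1 := by positivity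
  have hnum : Gamma (q + 1) ≤ q ^ q := by
    simpa [add_comm q] using Gamma_add_le_rpow_mul_Gamma one_pos hq
  have hden : (d + 1) ^ q * Gamma (d + 1) ≤ Gamma (q + d + 1) := by
    simpa [add_comm, add_left_comm, add_assoc] using rpow_mul_Gamma_le_Gamma_add hd hq
  calc l1BallMoment d q
      ≤ Gamma (d + 1) * q ^ q / ((d + 1) ^ q * Gamma (d + 1)) :=
        div_le_div₀ (by positivity) (mul_le_mul_of_nonneg_left hnum (by positivity))
          (by positivity) hden
    _ = (q / (d + 1)) ^ q := by
        rw [div_rpow (by linarith) hd.le]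
        field_simp

theorem integral_sum_abs_rpow_rpow_one_div_uniformBall_le {d : ℕ} {q : ℝ} (hq : 1 ≤ q) :
    ∫ u, (∑ i, |u i| ^ q) ^ (1 / q) ∂uniformBall d ≤ q * (d : ℝ) ^ (1 / q) / (d + 1) := by
  have hq₀ : 0 < q := by linarith
  have hcont : ∀ i : Fin d, Continuous fun u : Fin d → ℝ ↦ |u i| ^ q := fun i ↦ by
    fun_prop (disch := exact hq₀.le)
  have hsum : ∫ u, ∑ i, |u i| ^ q ∂uniformBall d = d * l1BallMoment d q := by
    rw [integral_finsetSum _ fun i _ ↦ (hcont i).integrable_uniformBall]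
    simp [integral_abs_rpow_uniformBall (by linarith : -1 < q)]
  calc ∫ u, (∑ i, |u i| ^ q) ^ (1 / q) ∂uniformBall d
      ≤ (∫ u, ∑ i, |u i| ^ q ∂uniformBall d) ^ (1 / q) :=
        integral_rpow_le_rpow_integral (by positivity) (by rw [div_le_one hq₀]; exact hq)
          (.of_forall fun u ↦ by positivity)
          (continuous_finsetSum _ fun i _ ↦ hcont i).integrable_uniformBall
          (continuous_sum_abs_rpow_rpow_one_div hq₀).integrable_uniformBall
    _ ≤ (d * (q / (d + 1)) ^ q) ^ (1 / q) := by
        rw [hsum]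
        have : 0 ≤ l1BallMoment d q := by unfold l1BallMoment; positivity
        gcongr
        exact l1BallMoment_le d hq
    _ = q * (d : ℝ) ^ (1 / q) / (d + 1) := by
        rw [mul_rpow (by positivity) (by positivity), ← rpow_mul (by positivity),
          mul_one_div_cancel hq₀.ne', rpow_one]
        ring

theorem smoothing_approximation_general (d : ℕ) (q : ℝ) (hq : 1 ≤ q)
    (f : (Fin d → ℝ) → ℝ) (L : ℝ) (hL : 0 ≤ L)
    (hf : ∀ x y, |f x - f y| ≤ L * (∑ i, |x i - y i| ^ q) ^ (1 / q))
    (h : ℝ) (hh : 0 < h) (x : Fin d → ℝ) :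
    |(∫ u, f (x + h • u) ∂uniformBall d) - f x| ≤
        L * h * ∫ u, (∑ i, |u i| ^ q) ^ (1 / q) ∂uniformBall d ∧
      |(∫ u, f (x + h • u) ∂uniformBall d) - f x| ≤
        L * h * q * (d : ℝ) ^ (1 / q) / ((d : ℝ) + 1) := by
  have hq₀ : 0 < q := by linarith
  have hf_cont := continuous_of_abs_sub_le_lq hq hf
  have happrox : |(∫ u, f (x + h • u) ∂uniformBall d) - f x| ≤
      L * h * ∫ u, (∑ i, |u i| ^ q) ^ (1 / q) ∂uniformBall d := by
    rw [← integral_const_mul]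
    exact abs_integral_sub_le_integral
      (by fun_prop : Continuous fun u ↦ f (x + h • u)).aestronglyMeasurable
      ((continuous_sum_abs_rpow_rpow_one_div hq₀).integrable_uniformBall.const_mul _)
      (.of_forall (abs_sub_le_of_abs_sub_le_lq hq₀ hf hh.le x))
  refine ⟨happrox, happrox.trans ?_⟩
  calc L * h * ∫ u, (∑ i, |u i| ^ q) ^ (1 / q) ∂uniformBall d
      ≤ L * h * (q * (d : ℝ) ^ (1 / q) / (d + 1)) := by
        gcongr
        exact integral_sum_abs_rpow_rpow_one_div_uniformBall_le hq
    _ = L * h * q * (d : ℝ) ^ (1 / q) / (d + 1) := by ring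

/-- If `f` is `L`-Lipschitz w.r.t. the ℓ_q norm, `h > 0`, `U` uniform on the ℓ¹-ball and
`f_h(x) = E[f(x + hU)]`, then `|f_h(x) - f(x)| ≤ L h E[‖U‖_q] ≤ L h q d^{1/q}/(d+1)`. -/
theorem smoothing_approximation (d : ℕ) (hd : 0 < d) (q : ℝ) (hq : 1 ≤ q)
    (f : (Fin d → ℝ) → ℝ) (L : ℝ) (hL : 0 ≤ L)
    (hf : ∀ x y, |f x - f y| ≤ L * (∑ i, |x i - y i| ^ q) ^ (1 / q))
    (h : ℝ) (hh : 0 < h) (x : Fin d → ℝ) :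
    |(∫ u, f (x + h • u) ∂uniformBall d) - f x| ≤
        L * h * ∫ u, (∑ i, |u i| ^ q) ^ (1 / q) ∂uniformBall d ∧
      |(∫ u, f (x + h • u) ∂uniformBall d) - f x| ≤
        L * h * q * (d : ℝ) ^ (1 / q) / ((d : ℝ) + 1) :=
  smoothing_approximation_general d q hq f L hL hf h hh x
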